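/- arXiv:2305.12950 — 5 statements merged into one kernel-verified Lean document; each statement's English description precedes it below -/
import Mathlib

section
/- Perfect security of Shamir secret sharing: let F be a finite field, 1 ≤ k < t, and let u_1,...,u_k be distinct nonzero points of F. For any secret s ∈ F, if f is chosen uniformly among polynomials of degree < t with f(0) = s, then the joint distribution of (f(u_1),...,f(u_k)) is uniform on F^k; in particular it is independent of s. -/
open scoped ENNReal

lemma pmf_key {α β : Type*} [Fintype α] [Fintype β] [Nonempty α] [Nonempty β]
    (f : α → β)
    (h : ∀ b, Nat.card {a // f a = b} * Fintype.card β = Fintype.card α) :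
    PMF.map f (PMF.uniformOfFintype α) = PMF.uniformOfFintype β := by
  classical
  ext b
  rw [PMF.map_apply, PMF.uniformOfFintype_apply, tsum_fintype]
  have hite : ∀ a : α, (if b = f a then (PMF.uniformOfFintype α) a else 0)
      = if b = f a then (Fintype.card α : ℝ≥0∞)⁻¹ else 0 := fun a => by
    simp [PMF.uniformOfFintype_apply]
  rw [Finset.sum_congr rfl fun a _ => hite a, ← Finset.sum_filter, Finset.sum_const,
    nsmul_eq_mul]
  have hcard : (Finset.univ.filter fun a => b = f a).card = Nat.card {a // f a = b} := by
    simp [Nat.card_eq_fintype_card, Fintype.card_subtype, eq_comm]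
  rw [hcard]
  have hb := h b
  have hcβ : (Fintype.card β : ℝ≥0∞) ≠ 0 := by exact_mod_cast Fintype.card_ne_zero
  have hx : (Nat.card {a // f a = b} : ℝ≥0∞) ≠ 0 := by
    have : Nat.card {a // f a = b} ≠ 0 := by
      intro h0
      rw [h0, zero_mul] at hb
      exact Fintype.card_ne_zero hb.symm
    exact_mod_cast this
  have hba : (Fintype.card α : ℝ≥0∞)
      = (Nat.card {a // f a = b} : ℝ≥0∞) * Fintype.card β := by exact_mod_cast hb.symm
  rw [hba, ENNReal.mul_inv (Or.inl hx) (Or.inr hcβ), ← mul_assoc,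
    ENNReal.mul_inv_cancel hx (by simp), one_mul]

open scoped ENNReal

lemma fiber_mul {M N : Type*} [AddCommGroup M] [AddCommGroup N] [Fintype M] [Fintype N]
    (φ : M →+ N) (hφ : Function.Surjective φ) (w : N) (b : N) :
    Nat.card {a // w + φ a = b} * Fintype.card N = Fintype.card M := by
  classical
  set f : M → N := fun a => w + φ a with hf
  have hconst : ∀ b' : N, Fintype.card {a // f a = b'} = Fintype.card {a // f a = b} := by
    intro b'
    obtain ⟨d, hd⟩ := hφ (b' - b)
    refine Fintype.card_congr ?_
    exact
      { toFun := fun x => ⟨x.1 - d, by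
          have := x.2
          simp only [hf] at this ⊢
          rw [map_sub, hd, ← add_sub_assoc, this]
          abel⟩
        invFun := fun x => ⟨x.1 + d, by
          have := x.2
          simp only [hf] at this ⊢
          rw [map_add, hd, ← add_assoc, this, add_sub_cancel]⟩
        left_inv := fun x => by ext; simp
        right_inv := fun x => by ext; simp }
  have hsum : Fintype.card M = ∑ b' : N, Fintype.card {a // f a = b'} := by
    rw [← Fintype.card_sigma]
    exact Fintype.card_congr (Equiv.sigmaFiberEquiv f).symm
  rw [Nat.card_eq_fintype_card, hsum, Finset.sum_congr rfl fun b' _ => hconst b',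
    Finset.sum_const, smul_eq_mul, Finset.card_univ, mul_comm]

lemma shamir_surj {F : Type*} [Field F] [DecidableEq F]
    (t k : ℕ) (hkt : k < t)
    (u : Fin k → F) (hu : Function.Injective u) (hu0 : ∀ i, u i ≠ 0) :
    Function.Surjective
      (fun c : Fin (t - 1) → F =>
        fun i : Fin k => ∑ j : Fin (t - 1), c j * u i ^ ((j : ℕ) + 1)) := by
  intro y
  set M' : Matrix (Fin k) (Fin k) F := fun i j => u i ^ ((j : ℕ) + 1) with hM'
  have hdet : IsUnit M'.det := by
    have h1 : M' = Matrix.diagonal u * Matrix.vandermonde u := by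
      ext i j
      simp [hM', Matrix.mul_apply, Matrix.diagonal, Matrix.vandermonde,
        Finset.sum_ite_eq, pow_succ, mul_comm]
    rw [h1, Matrix.det_mul, Matrix.det_diagonal, Matrix.det_vandermonde]
    refine (IsUnit.mul_iff).mpr ⟨?_, ?_⟩
    · exact (Finset.prod_ne_zero_iff.mpr fun i _ => hu0 i).isUnit
    · refine (Finset.prod_ne_zero_iff.mpr fun i _ => ?_).isUnit
      exact Finset.prod_ne_zero_iff.mpr fun j hj =>
        sub_ne_zero.mpr fun h => absurd (hu h) (Finset.mem_Ioi.mp hj).ne'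
  set x : Fin k → F := (M'⁻¹).mulVec y with hx
  have hMx : M'.mulVec x = y := by
    rw [hx, Matrix.mulVec_mulVec, Matrix.mul_nonsing_inv _ hdet, Matrix.one_mulVec]
  have hk1 : k ≤ t - 1 := by omega
  refine ⟨fun j => if h : (j : ℕ) < k then x ⟨j, h⟩ else 0, ?_⟩
  funext i
  show (∑ j : Fin (t - 1),
      (if h : (j : ℕ) < k then x ⟨(j : ℕ), h⟩ else 0) * u i ^ ((j : ℕ) + 1)) = y i
  rw [Fin.sum_univ_eq_sum_range
    (fun m => (if h : m < k then x ⟨m, h⟩ else 0) * u i ^ (m + 1))]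
  rw [← Finset.sum_subset (Finset.range_subset_range.mpr hk1)
    (fun m _ hm => by rw [dif_neg (by simpa using hm), zero_mul])]
  rw [← Fin.sum_univ_eq_sum_range
    (fun m => (if h : m < k then x ⟨m, h⟩ else 0) * u i ^ (m + 1)) ]
  rw [← hMx]
  simp only [Matrix.mulVec, dotProduct]
  refine Finset.sum_congr rfl fun j _ => ?_
  rw [dif_pos j.2, Fin.eta, mul_comm]

/-- Perfect security of Shamir secret sharing: for `1 ≤ k < t` and distinct
nonzero points `u_1, ..., u_k`, if the non-constant coefficients of the degree
`< t` sharing polynomial with constant term `s` are chosen uniformly, then the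
`k` shares are uniformly distributed on `F^k` (in particular, independent of
`s`). -/
theorem stmt_4 {F : Type*} [Field F] [Fintype F] [DecidableEq F]
    (t k : ℕ) (hk : 1 ≤ k) (hkt : k < t)
    (u : Fin k → F) (hu : Function.Injective u) (hu0 : ∀ i, u i ≠ 0) (s : F) :
    PMF.map
      (fun c : Fin (t - 1) → F =>
        fun i : Fin k => s + ∑ j : Fin (t - 1), c j * u i ^ ((j : ℕ) + 1))
      (PMF.uniformOfFintype (Fin (t - 1) → F))
    = PMF.uniformOfFintype (Fin k → F) := by
  let φ : (Fin (t - 1) → F) →+ (Fin k → F) :=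
    { toFun := fun c => fun i => ∑ j : Fin (t - 1), c j * u i ^ ((j : ℕ) + 1)
      map_zero' := by funext i; simp
      map_add' := fun c c' => by
        funext i
        simp [add_mul, Finset.sum_add_distrib] }
  refine pmf_key _ fun b => ?_
  exact fiber_mul φ (shamir_surj t k hkt u hu hu0) (fun _ => s) b
end

section
/- Perfect security of ramp secret sharing: let F be a finite field, 0 < d < t, and k ≤ t - d. Fix distinct nonzero points u_1,...,u_k of F. For any secret vector s ∈ F^d, if a_d,...,a_{t-1} are chosen uniformly and independently in F and f(x) = s_0 + ... + s_{d-1}x^{d-1} + a_d x^d + ... + a_{t-1}x^{t-1}, then the distribution of (f(u_1),...,f(u_k)) is uniform on F^k and hence independent of s. -/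
open scoped ENNReal

lemma pmf_map_uniform {α β : Type*} [Fintype α] [Fintype β] [Nonempty α] [Nonempty β]
    [DecidableEq β] (g : α → β)
    (h : ∀ y, ((Finset.univ.filter fun a => g a = y).card) * Fintype.card β = Fintype.card α) :
    PMF.map g (PMF.uniformOfFintype α) = PMF.uniformOfFintype β := by
  ext y
  rw [PMF.map_apply, PMF.uniformOfFintype_apply, tsum_fintype]
  simp only [PMF.uniformOfFintype_apply]
  rw [Finset.sum_ite, Finset.sum_const, Finset.sum_const_zero, add_zero]
  have hy := h y
  have hfil : (Finset.univ.filter fun a => y = g a) = (Finset.univ.filter fun a => g a = y) := by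
    apply Finset.filter_congr; intro a _; simp [eq_comm]
  rw [hfil]
  set N := (Finset.univ.filter fun a => g a = y).card with hN
  have hα : (Fintype.card α : ℝ≥0∞) ≠ 0 := by exact_mod_cast Fintype.card_ne_zero
  have hc : (N : ℝ≥0∞) * Fintype.card β = Fintype.card α := by exact_mod_cast hy
  have hN0 : (N : ℝ≥0∞) ≠ 0 := by
    intro h0; rw [h0, zero_mul] at hc; exact hα hc.symm
  have hNtop : (N : ℝ≥0∞) ≠ ⊤ := ENNReal.natCast_ne_top N
  rw [nsmul_eq_mul, ← hc, ENNReal.mul_inv (Or.inl hN0) (Or.inl hNtop),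
    ← mul_assoc, ENNReal.mul_inv_cancel hN0 hNtop, one_mul]

lemma sum_split {M : Type*} [AddCommMonoid M] (k m : ℕ) (f : Fin (k + m) → M) :
    ∑ j, f j = (∑ j : Fin k, f ⟨j, by omega⟩) + ∑ j : Fin m, f ⟨k + j, by omega⟩ := by
  rw [Fin.sum_univ_add]
  congr 1

lemma fiber_card {F : Type*} [Field F] [Fintype F] [DecidableEq F]
    (d k m : ℕ) (u : Fin k → F) (hu : Function.Injective u) (hu0 : ∀ i, u i ≠ 0)
    (w y : Fin k → F) :
    Fintype.card {b : Fin (k + m) → F //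
        (fun i => w i + ∑ j : Fin (k + m), b j * u i ^ (d + (j : ℕ))) = y}
      = Fintype.card F ^ m := by
  classical
  set M' : Matrix (Fin k) (Fin k) F := Matrix.of fun i j => u i ^ (d + (j : ℕ)) with hM'
  have hdet : IsUnit M'.det := by
    have hfac : M' = Matrix.diagonal (fun i => u i ^ d) * Matrix.vandermonde u := by
      ext i j
      simp [hM', Matrix.vandermonde, Matrix.diagonal_mul, pow_add]
    rw [isUnit_iff_ne_zero, hfac, Matrix.det_mul, Matrix.det_diagonal, Matrix.det_vandermonde]
    apply mul_ne_zero
    · exact Finset.prod_ne_zero_iff.mpr fun i _ => pow_ne_zero _ (hu0 i)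
    · refine Finset.prod_ne_zero_iff.mpr fun i _ => Finset.prod_ne_zero_iff.mpr fun j hj => ?_
      rw [Finset.mem_Ioi] at hj
      exact sub_ne_zero.mpr fun h => absurd (hu h) (Fin.ne_of_gt hj)
  have hsolve : ∀ x v : Fin k → F, M'.mulVec x = v ↔ x = M'⁻¹.mulVec v := by
    intro x v
    constructor
    · rintro rfl
      rw [Matrix.mulVec_mulVec, Matrix.nonsing_inv_mul _ hdet, Matrix.one_mulVec]
    · rintro rfl
      rw [Matrix.mulVec_mulVec, Matrix.mul_nonsing_inv _ hdet, Matrix.one_mulVec]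
  set hd' : (Fin (k + m) → F) → Fin k → F := fun b j => b ⟨j, by omega⟩ with hhd
  set tl : (Fin (k + m) → F) → Fin m → F := fun b j => b ⟨k + j, by omega⟩ with htl
  set rc : (Fin k → F) → (Fin m → F) → Fin (k + m) → F :=
    fun b c j => if h : (j : ℕ) < k then b ⟨j, h⟩ else c ⟨(j : ℕ) - k, by omega⟩ with hrc
  have hd_rc : ∀ b c, hd' (rc b c) = b := by
    intro b c; funext j
    simp only [hhd, hrc]
    rw [dif_pos j.isLt]
  have tl_rc : ∀ b c, tl (rc b c) = c := by
    intro b c; funext j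
    simp only [htl, hrc]
    rw [dif_neg (by omega)]
    congr 1
    exact Fin.ext (by simp)
  have rc_hd_tl : ∀ a, rc (hd' a) (tl a) = a := by
    intro a; funext j
    simp only [hhd, htl, hrc]
    by_cases h : (j : ℕ) < k
    · rw [dif_pos h]
    · rw [dif_neg h]
      exact congrArg a (Fin.ext (by simp; omega))
  set T : (Fin m → F) → Fin k → F := fun c i => ∑ j : Fin m, c j * u i ^ (d + (k + (j : ℕ))) with hT
  set B : (Fin m → F) → Fin k → F := fun c => M'⁻¹.mulVec (fun i => y i - w i - T c i) with hB
  have hsplit : ∀ (b : Fin (k + m) → F) (i : Fin k),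
      ∑ j : Fin (k + m), b j * u i ^ (d + (j : ℕ))
        = M'.mulVec (hd' b) i + T (tl b) i := by
    intro b i
    rw [sum_split k m (fun j => b j * u i ^ (d + (j : ℕ)))]
    congr 1
    · simp only [Matrix.mulVec, dotProduct, hM', Matrix.of_apply, hhd]
      exact Finset.sum_congr rfl fun j _ => mul_comm _ _
  have hiff : ∀ b : Fin (k + m) → F,
      ((fun i => w i + ∑ j : Fin (k + m), b j * u i ^ (d + (j : ℕ))) = y)
        ↔ hd' b = B (tl b) := by
    intro b
    rw [hB, ← hsolve]
    constructor
    · intro h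
      funext i
      have h2 := congrFun h i
      simp only [hsplit] at h2
      linear_combination h2
    · intro h
      funext i
      have h2 := congrFun h i
      simp only [hsplit]
      linear_combination h2
  have e : {b : Fin (k + m) → F //
      (fun i => w i + ∑ j : Fin (k + m), b j * u i ^ (d + (j : ℕ))) = y} ≃ (Fin m → F) :=
  { toFun := fun b => tl b.1
    invFun := fun c => ⟨rc (B c) c, by rw [hiff, hd_rc, tl_rc]⟩
    left_inv := fun b => by
      apply Subtype.ext
      show rc (B (tl b.1)) (tl b.1) = b.1
      rw [← (hiff b.1).mp b.2, rc_hd_tl]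
    right_inv := fun c => tl_rc (B c) c }
  rw [Fintype.card_congr e]
  simp

/-- Perfect security of ramp secret sharing: for `0 < d < t`, `k ≤ t - d`, and
distinct nonzero points `u_1, ..., u_k`, if the high coefficients
`a_d, ..., a_{t-1}` are chosen uniformly, then the `k` shares
`(f(u_1), ..., f(u_k))` are uniformly distributed on `F^k`, independent of the
secret `s ∈ F^d`. -/
theorem stmt_5 {F : Type*} [Field F] [Fintype F] [DecidableEq F]
    (t d k : ℕ) (hd : 0 < d) (hdt : d < t) (hk : 1 ≤ k) (hkt : k ≤ t - d)
    (u : Fin k → F) (hu : Function.Injective u) (hu0 : ∀ i, u i ≠ 0)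
    (s : Fin d → F) :
    PMF.map
      (fun a : Fin (t - d) → F =>
        fun i : Fin k =>
          (∑ j : Fin d, s j * u i ^ (j : ℕ)) +
            ∑ j : Fin (t - d), a j * u i ^ (d + (j : ℕ)))
      (PMF.uniformOfFintype (Fin (t - d) → F))
    = PMF.uniformOfFintype (Fin k → F) := by
  classical
  apply pmf_map_uniform
  intro y
  obtain ⟨m, hmn⟩ : ∃ m, k + m = t - d := ⟨t - d - k, by omega⟩
  rw [← Fintype.card_subtype]
  set w : Fin k → F := fun i => ∑ j : Fin d, s j * u i ^ (j : ℕ) with hw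
  have e : {a : Fin (t - d) → F //
      (fun i : Fin k => w i + ∑ j : Fin (t - d), a j * u i ^ (d + (j : ℕ))) = y}
      ≃ {b : Fin (k + m) → F //
      (fun i : Fin k => w i + ∑ j : Fin (k + m), b j * u i ^ (d + (j : ℕ))) = y} := by
    apply Equiv.subtypeEquiv (Equiv.arrowCongr (finCongr hmn.symm) (Equiv.refl F))
    intro a
    have : ∀ i : Fin k, ∑ j : Fin (k + m),
        (Equiv.arrowCongr (finCongr hmn.symm) (Equiv.refl F) a) j * u i ^ (d + (j : ℕ))
        = ∑ j : Fin (t - d), a j * u i ^ (d + (j : ℕ)) := by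
      intro i
      apply Fintype.sum_equiv (finCongr hmn)
      intro j
      simp [Equiv.arrowCongr]
    constructor
    · intro h; funext i; rw [this i]; exact congrFun h i
    · intro h; funext i; rw [← this i]; exact congrFun h i
  rw [Fintype.card_congr e, fiber_card d k m u hu hu0 w y]
  simp only [Fintype.card_fun, Fintype.card_fin]
  rw [← pow_add]
  congr 1
  omega
end

section
/- For a finite field F, 0 < d < t, distinct nonzero points u_1,...,u_{t-d} ∈ F, and any fixed s ∈ F^d, the map sending the random coefficients (a_d,...,a_{t-1}) ∈ F^{t-d} to the share vector (f(u_1),...,f(u_{t-d})), where f(x)= s_0+...+s_{d-1}x^{d-1}+a_d x^d+...+a_{t-1}x^{t-1}, is a bijection from F^{t-d} to F^{t-d}. -/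
/-- For `0 < d < t`, distinct nonzero points `u_1, ..., u_{t-d}` and a fixed
secret `s ∈ F^d`, the map sending the random high coefficients
`(a_d, ..., a_{t-1})` to the share vector `(f(u_1), ..., f(u_{t-d}))` is a
bijection from `F^{t-d}` to `F^{t-d}`. -/
theorem stmt_6 {F : Type*} [Field F] (t d : ℕ) (hd : 0 < d) (hdt : d < t)
    (u : Fin (t - d) → F) (hu : Function.Injective u) (hu0 : ∀ i, u i ≠ 0)
    (s : Fin d → F) :
    Function.Bijective
      (fun a : Fin (t - d) → F =>
        fun i : Fin (t - d) =>
          (∑ j : Fin d, s j * u i ^ (j : ℕ)) +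
            ∑ j : Fin (t - d), a j * u i ^ (d + (j : ℕ))) := by
  set M : Matrix (Fin (t - d)) (Fin (t - d)) F := Matrix.of fun i j => u i ^ (d + (j : ℕ)) with hM
  have hMdet : M.det ≠ 0 := by
    have hfac : M = Matrix.diagonal (fun i => u i ^ d) * Matrix.vandermonde u := by
      ext i j
      simp [hM, Matrix.diagonal_mul, Matrix.vandermonde, pow_add]
    rw [hfac, Matrix.det_mul, Matrix.det_diagonal]
    exact mul_ne_zero (Finset.prod_ne_zero_iff.2 fun i _ => pow_ne_zero _ (hu0 i))
      ((Matrix.det_vandermonde_ne_zero_iff).2 hu)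
  have hunit : IsUnit M := (Matrix.isUnit_iff_isUnit_det M).2 (Ne.isUnit hMdet)
  have hbij : Function.Bijective M.mulVec :=
    ⟨Matrix.mulVec_injective_iff_isUnit.2 hunit, Matrix.mulVec_surjective_iff_isUnit.2 hunit⟩
  have heq : (fun a : Fin (t - d) → F =>
      fun i : Fin (t - d) =>
        (∑ j : Fin d, s j * u i ^ (j : ℕ)) +
          ∑ j : Fin (t - d), a j * u i ^ (d + (j : ℕ)))
      = (fun v : Fin (t - d) → F => (fun i => ∑ j : Fin d, s j * u i ^ (j : ℕ)) + v) ∘ M.mulVec := by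
    funext a
    funext i
    simp [Matrix.mulVec, dotProduct, hM, mul_comm]
  rw [heq]
  exact (Equiv.addLeft _).bijective.comp hbij
end

section
/- FSSA aggregation correctness: let F be a finite field, d < t ≤ n. For each client u in a set U_2 and each block i, let f_{u,i} be a polynomial over F of degree < t whose d low-order coefficients are the block x_u^i of client u's input. Suppose each surviving client v in a set U_3 ⊆ U_2 with |U_3| ≥ t reports the sum g_i(v) where g_i = Σ_{u ∈ U_2} f_{u,i}, evaluated at v's distinct nonzero assigned point. Then interpolating g_i from these |U_3| ≥ t evaluations recovers exactly the blockwise sum Σ_{u ∈ U_2} x_u^i. -/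
open Polynomial

/-- FSSA aggregation correctness: if each client `u ∈ U₂` ramp-shares each
block `x u i` of its input via a polynomial `f u i` of degree `< t` whose `d`
low-order coefficients are the block, and the surviving set `U₃ ⊆ U₂` with
`|U₃| ≥ t` reports evaluations of `g i = Σ_{u ∈ U₂} f u i` at its distinct
nonzero assigned points, then interpolating from these evaluations recovers
exactly the blockwise sums `Σ_{u ∈ U₂} x u i`. -/
theorem stmt_10 {F : Type*} [Field F] {ι β : Type*} [DecidableEq ι]
    (n t d : ℕ) (hd : 0 < d) (hdt : d < t) (htn : t ≤ n)
    (U₂ U₃ : Finset ι) (hU : U₃ ⊆ U₂) (hn : U₂.card ≤ n) (hU₃ : t ≤ U₃.card)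
    (pt : ι → F) (hpt : Set.InjOn pt U₃) (hpt0 : ∀ v ∈ U₃, pt v ≠ 0)
    (x : ι → β → Fin d → F) (f : ι → β → F[X])
    (hfdeg : ∀ u ∈ U₂, ∀ i : β, (f u i).degree < (t : WithBot ℕ))
    (hfcoef : ∀ u ∈ U₂, ∀ i : β, ∀ j : Fin d, (f u i).coeff j = x u i j) :
    ∀ i : β, ∀ j : Fin d,
      (Lagrange.interpolate U₃ pt
          (fun v => (∑ u ∈ U₂, f u i).eval (pt v))).coeff j
        = ∑ u ∈ U₂, x u i j := by
  intro i j
  have hdeg : (∑ u ∈ U₂, f u i).degree < (U₃.card : ℕ) := by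
    refine lt_of_le_of_lt (Polynomial.degree_sum_le _ _) ?_
    rw [Finset.sup_lt_iff (by exact_mod_cast Nat.lt_of_lt_of_le (Nat.lt_of_lt_of_le hdt hU₃) le_rfl |>.trans_le le_rfl |> fun h => WithBot.bot_lt_coe _)]
    intro u hu
    exact lt_of_lt_of_le (hfdeg u hu i) (by exact_mod_cast hU₃)
  rw [← Lagrange.eq_interpolate hpt hdeg, Polynomial.finset_sum_coeff]
  exact Finset.sum_congr rfl fun u hu => hfcoef u hu i j
end

section
/- Let F be a finite field, 0 < d < t, and k ≤ t - d shares at distinct nonzero points u_1,...,u_k. For any two secrets s, s' ∈ F^d and any observed share vector w ∈ F^k, the number of coefficient choices (a_d,...,a_{t-1}) ∈ F^{t-d} producing shares w for secret s equals the number producing shares w for secret s' (both equal |F|^{t-d-k}). -/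
open Finset

lemma count_sols {F : Type*} [Field F] [Fintype F] [DecidableEq F]
    (n k : ℕ) (hk : k ≤ n) (u : Fin k → F) (hu : Function.Injective u)
    (c : Fin k → F) :
    ((Finset.univ : Finset (Fin n → F)).filter
      (fun a => ∀ i : Fin k, ∑ j : Fin n, a j * u i ^ (j : ℕ) = c i)).card
      = Fintype.card F ^ (n - k) := by
  classical
  set M : Matrix (Fin k) (Fin n) F := fun i j => u i ^ (j : ℕ) with hM
  set f := M.mulVecLin with hf
  have hcond : ∀ a : Fin n → F,
      (∀ i : Fin k, ∑ j : Fin n, a j * u i ^ (j : ℕ) = c i) ↔ f a = c := by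
    intro a
    rw [funext_iff]
    refine forall_congr' fun i => ?_
    rw [hf, Matrix.mulVecLin_apply]
    simp [Matrix.mulVec, dotProduct, hM, mul_comm]
  -- Vandermonde submatrix invertible
  have hVdet : (Matrix.vandermonde u).det ≠ 0 :=
    Matrix.det_vandermonde_ne_zero_iff.mpr hu
  have hsurj : Function.Surjective f := by
    intro b
    set x := (Matrix.vandermonde u)⁻¹.mulVec b with hx
    refine ⟨fun j => if h : (j : ℕ) < k then x ⟨j, h⟩ else 0, ?_⟩
    funext i
    have : f (fun j => if h : (j : ℕ) < k then x ⟨j, h⟩ else 0) i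
        = ∑ j : Fin n, M i j * (if h : (j : ℕ) < k then x ⟨j, h⟩ else 0) := by
      simp [hf, Matrix.mulVecLin_apply, Matrix.mulVec, dotProduct]
    rw [this]
    rw [← Finset.sum_subset (Finset.subset_univ
      ((Finset.univ : Finset (Fin k)).map (Fin.castLEEmb hk)))]
    · rw [Finset.sum_map]
      have : ∀ j : Fin k, M i (Fin.castLEEmb hk j)
          * (if h : ((Fin.castLEEmb hk j : Fin n) : ℕ) < k then x ⟨_, h⟩ else 0)
          = Matrix.vandermonde u i j * x j := by
        intro j
        simp [Matrix.vandermonde, hM, Fin.castLEEmb, Fin.castLE]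
      rw [Finset.sum_congr rfl fun j _ => this j]
      have := Matrix.mul_nonsing_inv (Matrix.vandermonde u) (isUnit_iff_ne_zero.mpr hVdet)
      calc ∑ j : Fin k, Matrix.vandermonde u i j * x j
          = ((Matrix.vandermonde u).mulVec x) i := rfl
        _ = b i := by
            rw [hx, Matrix.mulVec_mulVec, this, Matrix.one_mulVec]
    · intro j _ hj
      have : ¬ ((j : ℕ) < k) := by
        intro h
        exact hj (Finset.mem_map.mpr ⟨⟨j, h⟩, Finset.mem_univ _, rfl⟩)
      simp [this]
  -- pick a base solution
  obtain ⟨a₀, ha₀⟩ := hsurj c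
  -- fiber ≃ kernel
  have e : {a : Fin n → F // f a = c} ≃ LinearMap.ker f :=
    { toFun := fun x => ⟨x.1 - a₀, by
        simp [LinearMap.mem_ker, map_sub, x.2, ha₀]⟩
      invFun := fun y => ⟨y.1 + a₀, by
        have := y.2
        simp only [LinearMap.mem_ker] at this
        simp [map_add, this, ha₀]⟩
      left_inv := fun x => by simp
      right_inv := fun y => by simp }
  have hfilt : ((Finset.univ : Finset (Fin n → F)).filter
      (fun a => ∀ i : Fin k, ∑ j : Fin n, a j * u i ^ (j : ℕ) = c i))
      = (Finset.univ : Finset (Fin n → F)).filter (fun a => f a = c) :=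
    Finset.filter_congr (fun a _ => by rw [hcond a])
  have hcard1 : ((Finset.univ : Finset (Fin n → F)).filter
      (fun a => ∀ i : Fin k, ∑ j : Fin n, a j * u i ^ (j : ℕ) = c i)).card
      = Fintype.card {a : Fin n → F // f a = c} := by
    rw [hfilt, Fintype.card_subtype]
  rw [hcard1, Fintype.card_congr e]
  -- kernel cardinality
  have hrank : Module.finrank F (LinearMap.ker f) = n - k := by
    have h1 := LinearMap.finrank_range_add_finrank_ker f
    have h2 : LinearMap.range f = ⊤ := LinearMap.range_eq_top.mpr hsurj
    rw [h2] at h1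
    have h3 : Module.finrank F (⊤ : Submodule F (Fin k → F)) = k := by
      rw [finrank_top, Module.finrank_fintype_fun_eq_card, Fintype.card_fin]
    have h4 : Module.finrank F (Fin n → F) = n := by
      rw [Module.finrank_fintype_fun_eq_card, Fintype.card_fin]
    rw [h3, h4] at h1
    exact Nat.eq_sub_of_add_eq' h1
  rw [Module.card_eq_pow_finrank (K := F) (V := LinearMap.ker f), hrank]


/-- Counting reformulation of ramp perfect security: for `0 < d < t`,
`k ≤ t - d` shares at distinct nonzero points, any two secrets `s, s'` and
any observed share vector `w`, the number of high-coefficient choices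
producing shares `w` for `s` equals that for `s'`, both equal to
`|F|^(t-d-k)`. -/
theorem stmt_15 {F : Type*} [Field F] [Fintype F] [DecidableEq F]
    (t d k : ℕ) (hd : 0 < d) (hdt : d < t) (hk : k ≤ t - d)
    (u : Fin k → F) (hu : Function.Injective u) (hu0 : ∀ i, u i ≠ 0)
    (s s' : Fin d → F) (w : Fin k → F) :
    ((Finset.univ : Finset (Fin (t - d) → F)).filter
        (fun a => ∀ i : Fin k,
          (∑ j : Fin d, s j * u i ^ (j : ℕ)) +
            (∑ j : Fin (t - d), a j * u i ^ (d + (j : ℕ))) = w i)).card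
      = ((Finset.univ : Finset (Fin (t - d) → F)).filter
        (fun a => ∀ i : Fin k,
          (∑ j : Fin d, s' j * u i ^ (j : ℕ)) +
            (∑ j : Fin (t - d), a j * u i ^ (d + (j : ℕ))) = w i)).card ∧
    ((Finset.univ : Finset (Fin (t - d) → F)).filter
        (fun a => ∀ i : Fin k,
          (∑ j : Fin d, s j * u i ^ (j : ℕ)) +
            (∑ j : Fin (t - d), a j * u i ^ (d + (j : ℕ))) = w i)).card
      = Fintype.card F ^ (t - d - k) := by
  classical
  have key : ∀ sv : Fin d → F,
      ((Finset.univ : Finset (Fin (t - d) → F)).filter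
        (fun a => ∀ i : Fin k,
          (∑ j : Fin d, sv j * u i ^ (j : ℕ)) +
            (∑ j : Fin (t - d), a j * u i ^ (d + (j : ℕ))) = w i)).card
      = Fintype.card F ^ (t - d - k) := by
    intro sv
    have hfilt : ((Finset.univ : Finset (Fin (t - d) → F)).filter
        (fun a => ∀ i : Fin k,
          (∑ j : Fin d, sv j * u i ^ (j : ℕ)) +
            (∑ j : Fin (t - d), a j * u i ^ (d + (j : ℕ))) = w i))
        = (Finset.univ : Finset (Fin (t - d) → F)).filter
        (fun a => ∀ i : Fin k,
          ∑ j : Fin (t - d), a j * u i ^ (j : ℕ)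
            = (w i - ∑ j : Fin d, sv j * u i ^ (j : ℕ)) * (u i ^ d)⁻¹) := by
      refine Finset.filter_congr fun a _ => ?_
      refine forall_congr' fun i => ?_
      have hne : u i ^ d ≠ 0 := pow_ne_zero _ (hu0 i)
      have hsum : ∑ j : Fin (t - d), a j * u i ^ (d + (j : ℕ))
          = u i ^ d * ∑ j : Fin (t - d), a j * u i ^ (j : ℕ) := by
        rw [Finset.mul_sum]
        refine Finset.sum_congr rfl fun j _ => ?_
        rw [pow_add]; ring
      rw [hsum, eq_mul_inv_iff_mul_eq₀ hne]
      constructor <;> intro h <;> linear_combination h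
    rw [hfilt]
    exact count_sols (t - d) k hk u hu _
  exact ⟨(key s).trans (key s').symm, key s⟩
end
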